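/- arXiv:1807.08978 — 2 statements merged into one kernel-verified Lean document; each statement's English description precedes it below -/
import Mathlib

section
/- For every x > 0 and b ≥ 0, ∫₀^b Γ(0, x, z) dz = e^{-x} - Γ(1, x, b). -/
/-!
Write `Γ(0, x, z) = ∫ₓ^∞ t⁻¹ e^{-t} e^{-z/t} dt` and swap the two integrals: for `z` between
`0` and `b` and `t > x > 0` the integrand is dominated by the integrable `e^{|b|/x} t⁻¹ e^{-t}`.
The inner integral `∫₀^b e^{-z/t} dz = t (1 - e^{-b/t})` cancels the factor `t⁻¹`, leaving
`∫ₓ^∞ (e^{-t} - e^{-t} e^{-b/t}) dt = e^{-x} - Γ(1, x, b)`.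
-/

open MeasureTheory Real

/-- Generalized incomplete gamma function `Γ(a, x, b) = ∫ₓ^∞ t^{a-1} e^{-t} e^{-b/t} dt`. -/
noncomputable def genGamma (a x b : ℝ) : ℝ :=
  ∫ t in Set.Ioi x, t ^ (a - 1) * Real.exp (-t) * Real.exp (-b / t)

open Set

lemma genGamma_zero (x z : ℝ) :
    genGamma 0 x z = ∫ t in Ioi x, t⁻¹ * exp (-t) * exp (-z / t) := by
  simp only [genGamma, zero_sub, rpow_neg_one]

lemma genGamma_one (x b : ℝ) :
    genGamma 1 x b = ∫ t in Ioi x, exp (-t) * exp (-b / t) := by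
  simp only [genGamma, sub_self, rpow_zero, one_mul]

lemma integral_exp_neg_div (b : ℝ) {t : ℝ} (ht : t ≠ 0) :
    ∫ z in (0 : ℝ)..b, exp (-z / t) = t * (1 - exp (-b / t)) := by
  simp only [neg_div]
  rw [intervalIntegral.integral_comp_div (fun u => exp (-u)) ht,
    intervalIntegral.integral_comp_neg, integral_exp]
  simp [smul_eq_mul]

lemma exp_neg_div_le_exp_abs_div {x t : ℝ} (z : ℝ) (hx : 0 < x) (hxt : x ≤ t) :
    exp (-z / t) ≤ exp (|z| / x) := by
  have ht : 0 < t := hx.trans_le hxt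
  refine exp_le_exp.mpr ?_
  calc -z / t ≤ |z| / t := by gcongr; exact neg_le_abs z
    _ ≤ |z| / x := by gcongr

lemma integrableOn_inv_mul_exp_neg_Ioi {x : ℝ} (hx : 0 < x) :
    IntegrableOn (fun t => t⁻¹ * exp (-t)) (Ioi x) := by
  refine ((exp_neg_integrableOn_Ioi x one_pos).const_mul x⁻¹).mono' (by fun_prop) ?_
  filter_upwards [ae_restrict_mem measurableSet_Ioi] with t (ht : x < t)
  have ht0 : 0 < t := hx.trans ht
  rw [norm_of_nonneg (by positivity), neg_one_mul]
  gcongr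

lemma integrableOn_exp_neg_mul_exp_neg_div_Ioi {x : ℝ} (hx : 0 < x) (b : ℝ) :
    IntegrableOn (fun t => exp (-t) * exp (-b / t)) (Ioi x) := by
  refine ((exp_neg_integrableOn_Ioi x one_pos).const_mul (exp (|b| / x))).mono' (by fun_prop) ?_
  filter_upwards [ae_restrict_mem measurableSet_Ioi] with t (ht : x < t)
  rw [norm_of_nonneg (by positivity), neg_one_mul, mul_comm (exp (|b| / x))]
  exact mul_le_mul_of_nonneg_left (exp_neg_div_le_exp_abs_div b hx ht.le) (exp_pos _).le

lemma integrable_genGamma_zero_integrand {x : ℝ} (hx : 0 < x) (b : ℝ) :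
    Integrable (Function.uncurry fun z t => t⁻¹ * exp (-t) * exp (-z / t))
      ((volume.restrict (uIoc 0 b)).prod (volume.restrict (Ioi x))) := by
  have : IsFiniteMeasure (volume.restrict (uIoc 0 b)) := by
    rw [uIoc]; infer_instance
  refine ((integrable_const (exp (|b| / x))).mul_prod
    (integrableOn_inv_mul_exp_neg_Ioi hx)).mono' (by fun_prop) ?_
  rw [Measure.prod_restrict]
  filter_upwards [ae_restrict_mem (measurableSet_uIoc.prod measurableSet_Ioi)]
    with ⟨z, t⟩ ⟨(hz : z ∈ uIoc 0 b), (ht : x < t)⟩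
  have hzb : |z| ≤ |b| := by simpa using abs_sub_left_of_mem_uIcc (uIoc_subset_uIcc hz)
  have ht0 : 0 < t := hx.trans ht
  rw [Function.uncurry_apply_pair, norm_of_nonneg (by positivity), mul_comm (exp _)]
  refine mul_le_mul_of_nonneg_left ?_ (by positivity)
  exact (exp_neg_div_le_exp_abs_div z hx ht.le).trans (exp_le_exp.mpr (by gcongr))

theorem integral_genGamma_zero_general (x b : ℝ) (hx : 0 < x) :
    ∫ z in (0 : ℝ)..b, genGamma 0 x z = Real.exp (-x) - genGamma 1 x b := by
  simp_rw [genGamma_zero]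
  calc ∫ z in (0 : ℝ)..b, ∫ t in Ioi x, t⁻¹ * exp (-t) * exp (-z / t)
      = ∫ t in Ioi x, ∫ z in (0 : ℝ)..b, t⁻¹ * exp (-t) * exp (-z / t) :=
        intervalIntegral_integral_swap (integrable_genGamma_zero_integrand hx b)
    _ = ∫ t in Ioi x, (exp (-t) - exp (-t) * exp (-b / t)) := by
        refine setIntegral_congr_fun measurableSet_Ioi fun t (ht : x < t) => ?_
        have ht0 : t ≠ 0 := (hx.trans ht).ne'
        rw [intervalIntegral.integral_const_mul, integral_exp_neg_div b ht0]
        field_simp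
    _ = exp (-x) - genGamma 1 x b := by
        have hexp : IntegrableOn (fun t => exp (-t)) (Ioi x) := by
          simpa using exp_neg_integrableOn_Ioi x one_pos
        rw [integral_sub hexp (integrableOn_exp_neg_mul_exp_neg_div_Ioi hx b),
          integral_exp_neg_Ioi, genGamma_one]

/-- For every `x > 0` and `b ≥ 0`, `∫₀^b Γ(0, x, z) dz = e^{-x} - Γ(1, x, b)`. -/
theorem integral_genGamma_zero (x b : ℝ) (hx : 0 < x) (hb : 0 ≤ b) :
    ∫ z in (0 : ℝ)..b, genGamma 0 x z = Real.exp (-x) - genGamma 1 x b :=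
  integral_genGamma_zero_general x b hx
end

section
/- (Rayleigh and double-Rayleigh MGF) Let γ̄ > 0, 0 < α < 1 and s < 0. Then ∫₀^∞ e^{-x}/(1 - s γ̄ (1 - α(1 - x))) dx = -( e^{(s γ̄ (1-α) - 1)/(s γ̄ α)} / (s γ̄ α) ) E₁( (s (1-α) γ̄ - 1)/(s γ̄ α) ). -/
open MeasureTheory Real

/-- Exponential integral `E₁(x) = ∫ₓ^∞ t⁻¹ e^{-t} dt`. -/
noncomputable def expInt (x : ℝ) : ℝ :=
  ∫ t in Set.Ioi x, Real.exp (-t) / t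

/-!
Writing the denominator as `b (x + c)` with `b = -sγ̄α` and `c = (1 - sγ̄(1-α))/b`, and
`e^{-x} = e^{c} e^{-(x+c)}`, the integrand becomes `e^{c}/b · e^{-(x+c)}/(x+c)`; the translation
`t = x + c` turns the remaining integral into `E₁(c)`. No convergence is needed: the identity
holds pointwise under the integral sign, and translation preserves Lebesgue measure.
-/

lemma setIntegral_Ioi_comp_add_right {E : Type*} [NormedAddCommGroup E] [NormedSpace ℝ E]
    (g : ℝ → E) (a c : ℝ) :
    ∫ x in Set.Ioi a, g (x + c) = ∫ x in Set.Ioi (a + c), g x := by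
  have := (measurePreserving_add_right volume c).setIntegral_preimage_emb
    (measurableEmbedding_addRight c) g (Set.Ioi (a + c))
  rwa [Set.preimage_add_const_Ioi, add_sub_cancel_right] at this

lemma integral_Ioi_exp_neg_div_add (c : ℝ) :
    ∫ x in Set.Ioi (0 : ℝ), exp (-(x + c)) / (x + c) = expInt c := by
  rw [setIntegral_Ioi_comp_add_right (fun t => exp (-t) / t), zero_add, expInt]

lemma integral_Ioi_exp_neg_div_linear (a : ℝ) {b : ℝ} (hb : b ≠ 0) :
    ∫ x in Set.Ioi (0 : ℝ), exp (-x) / (a + b * x) = exp (a / b) / b * expInt (a / b) := by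
  have integrand_eq (x : ℝ) :
      exp (-x) / (a + b * x) = exp (a / b) / b * (exp (-(x + a / b)) / (x + a / b)) := by
    have hden : a + b * x = b * (x + a / b) := by field_simp; ring
    rw [hden, ← mul_div_mul_comm, ← exp_add]
    congr 2
    ring
  simp_rw [integrand_eq, integral_const_mul, integral_Ioi_exp_neg_div_add]

theorem rdr_mgf_general (γbar α s : ℝ) (hγbar : 0 < γbar) (hα0 : 0 < α)
    (hs : s < 0) :
    ∫ x in Set.Ioi (0 : ℝ), Real.exp (-x) / (1 - s * γbar * (1 - α * (1 - x)))
      = -(Real.exp ((s * γbar * (1 - α) - 1) / (s * γbar * α)) / (s * γbar * α)) *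
          expInt ((s * (1 - α) * γbar - 1) / (s * γbar * α)) := by
  have hb : -(s * γbar * α) ≠ 0 :=
    neg_ne_zero.mpr (mul_neg_of_neg_of_pos (mul_neg_of_neg_of_pos hs hγbar) hα0).ne
  have hden (x : ℝ) : 1 - s * γbar * (1 - α * (1 - x))
      = (1 - s * γbar * (1 - α)) + -(s * γbar * α) * x := by ring
  have harg : (1 - s * γbar * (1 - α)) / -(s * γbar * α)
      = (s * γbar * (1 - α) - 1) / (s * γbar * α) := by
    rw [div_neg, ← neg_div, neg_sub]
  simp_rw [hden, integral_Ioi_exp_neg_div_linear _ hb, harg, div_neg]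
  rw [mul_right_comm s]

/-- **Rayleigh and double-Rayleigh (RDR) MGF.** For `γ̄ > 0`, `0 < α < 1` and `s < 0`,
`∫₀^∞ e^{-x}/(1 - sγ̄(1-α(1-x))) dx
  = -( e^{(sγ̄(1-α)-1)/(sγ̄α)} / (sγ̄α) ) E₁((s(1-α)γ̄-1)/(sγ̄α))`. -/
theorem rdr_mgf (γbar α s : ℝ) (hγbar : 0 < γbar) (hα0 : 0 < α) (hα1 : α < 1)
    (hs : s < 0) :
    ∫ x in Set.Ioi (0 : ℝ), Real.exp (-x) / (1 - s * γbar * (1 - α * (1 - x)))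
      = -(Real.exp ((s * γbar * (1 - α) - 1) / (s * γbar * α)) / (s * γbar * α)) *
          expInt ((s * (1 - α) * γbar - 1) / (s * γbar * α)) :=
  rdr_mgf_general γbar α s hγbar hα0 hs
end
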